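/- Let μ₁, μ₂, β > 0 and define V₂(z) = -2·log(1 + (μ₂/8)(1 + β/√(μ₁μ₂))·|z|²) and V₁(z) = V₂(z) - log(μ₁/μ₂) on ℝ². Then (V₁, V₂) solves the system -ΔV₁ = μ₁e^{V₁} + β·e^{(V₁+V₂)/2} and -ΔV₂ = μ₂e^{V₂} + β·e^{(V₁+V₂)/2} on ℝ². -/

import Mathlib

/-!
`V₂ = -2 log (1 + c‖z‖²)` is the standard Liouville bubble: a direct computation gives
`-ΔV₂ = 8c / (1 + c‖z‖²)² = 8c e^{V₂}`. Since `V₁` differs from `V₂` by a constant, both have the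
same Laplacian, `μ₁ e^{V₁} = μ₂ e^{V₂}`, and `e^{(V₁+V₂)/2} = (μ₂ / √(μ₁μ₂)) e^{V₂}`. Both equations
therefore reduce to `8c = μ₂ (1 + β / √(μ₁μ₂))`, which is how `c` is chosen.
-/

/-- The Laplacian of a real-valued function on `ℝ²`. -/
noncomputable def laplacian (f : EuclideanSpace ℝ (Fin 2) → ℝ)
    (z : EuclideanSpace ℝ (Fin 2)) : ℝ :=
  ∑ i : Fin 2,
    fderiv ℝ (fun w => fderiv ℝ f w (EuclideanSpace.single i 1)) z (EuclideanSpace.single i 1)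

open Real

section InnerProductSpace

variable {F : Type*} [NormedAddCommGroup F] [InnerProductSpace ℝ F]

theorem hasFDerivAt_one_add_mul_norm_sq (c : ℝ) (w : F) :
    HasFDerivAt (fun w : F => 1 + c * ‖w‖ ^ 2) ((2 * c) • innerSL ℝ w) w := by
  refine (((hasStrictFDerivAt_norm_sq w).hasFDerivAt.const_mul c).const_add 1).congr_fderiv ?_
  rw [← Nat.cast_smul_eq_nsmul ℝ, smul_smul, Nat.cast_ofNat, mul_comm]

theorem hasFDerivAt_log_one_add_mul_norm_sq {c : ℝ} (hc : 0 ≤ c) (w : F) :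
    HasFDerivAt (fun w : F => log (1 + c * ‖w‖ ^ 2))
      ((2 * c / (1 + c * ‖w‖ ^ 2)) • innerSL ℝ w) w := by
  have hq : 1 + c * ‖w‖ ^ 2 ≠ 0 := by positivity
  convert (hasFDerivAt_one_add_mul_norm_sq c w).log hq using 1
  rw [smul_smul, div_eq_inv_mul]

end InnerProductSpace

section EuclideanSpace

variable {ι : Type*} [Fintype ι] [DecidableEq ι] {c : ℝ}

theorem fderiv_neg_two_mul_log_one_add_mul_norm_sq_single (hc : 0 ≤ c) (i : ι)
    (w : EuclideanSpace ℝ ι) :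
    fderiv ℝ (fun w : EuclideanSpace ℝ ι => -2 * log (1 + c * ‖w‖ ^ 2)) w
        (EuclideanSpace.single i 1) = -4 * c / (1 + c * ‖w‖ ^ 2) * w i := by
  rw [((hasFDerivAt_log_one_add_mul_norm_sq hc w).const_mul (-2)).fderiv]
  simp only [neg_smul, neg_apply, smul_apply,
    innerSL_apply_apply, EuclideanSpace.inner_single_right, conj_trivial, one_mul, smul_eq_mul]
  ring

theorem fderiv_div_one_add_mul_norm_sq_mul_apply_single (a : ℝ) (hc : 0 ≤ c) (i : ι)
    (z : EuclideanSpace ℝ ι) :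
    fderiv ℝ (fun w : EuclideanSpace ℝ ι => a / (1 + c * ‖w‖ ^ 2) * w i) z
        (EuclideanSpace.single i 1)
      = a / (1 + c * ‖z‖ ^ 2) - 2 * a * c * z i ^ 2 / (1 + c * ‖z‖ ^ 2) ^ 2 := by
  have hq : 1 + c * ‖z‖ ^ 2 ≠ 0 := by positivity
  have h := (((hasDerivAt_inv hq).comp_hasFDerivAt z
    (hasFDerivAt_one_add_mul_norm_sq c z)).const_mul a).mul
    (EuclideanSpace.proj (𝕜 := ℝ) i).hasFDerivAt
  simp only [Function.comp_def, Pi.mul_def, ← div_eq_mul_inv, PiLp.proj_apply] at h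
  rw [h.fderiv]
  simp only [add_apply, smul_apply, PiLp.proj_apply,
    PiLp.single_eq_same, neg_apply, innerSL_apply_apply,
    EuclideanSpace.inner_single_right, conj_trivial, smul_eq_mul, neg_smul, smul_neg, mul_one,
    one_mul]
  field_simp
  ring

theorem laplacian_sub_const (f : EuclideanSpace ℝ (Fin 2) → ℝ) (a : ℝ)
    (z : EuclideanSpace ℝ (Fin 2)) :
    laplacian (fun w => f w - a) z = laplacian f z := by
  simp only [laplacian, fderiv_sub_const]

theorem laplacian_neg_two_mul_log_one_add_mul_norm_sq {c : ℝ} (hc : 0 ≤ c)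
    (z : EuclideanSpace ℝ (Fin 2)) :
    laplacian (fun w => -2 * log (1 + c * ‖w‖ ^ 2)) z = -8 * c / (1 + c * ‖z‖ ^ 2) ^ 2 := by
  have hq : 1 + c * ‖z‖ ^ 2 ≠ 0 := by positivity
  have hnorm : ‖z‖ ^ 2 = z 0 ^ 2 + z 1 ^ 2 := by
    simp [EuclideanSpace.norm_sq_eq, Fin.sum_univ_two]
  simp only [laplacian, fderiv_neg_two_mul_log_one_add_mul_norm_sq_single hc,
    fderiv_div_one_add_mul_norm_sq_mul_apply_single _ hc, Fin.sum_univ_two]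
  rw [hnorm] at hq ⊢
  field_simp
  ring

theorem exp_neg_two_mul_log {q : ℝ} (hq : 0 < q) : exp (-2 * log q) = (q ^ 2)⁻¹ := by
  rw [neg_mul, exp_neg, ← Nat.cast_ofNat, ← log_pow, exp_log (by positivity)]

theorem exp_log_div_two {x : ℝ} (hx : 0 < x) : exp (log x / 2) = √x := by
  rw [sqrt_eq_rpow, rpow_def_of_pos hx, div_eq_mul_one_div]

theorem sqrt_div_eq_sqrt_mul_div {a b : ℝ} (ha : 0 ≤ a) (hb : 0 < b) :
    √(a / b) = √(a * b) / b := by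
  rw [sqrt_div' _ hb.le, sqrt_mul ha]
  field_simp
  rw [sq_sqrt hb.le]

/-- The explicit pair `(V₁, V₂)` solves the Liouville-type system
`-ΔV₁ = μ₁e^{V₁} + βe^{(V₁+V₂)/2}`, `-ΔV₂ = μ₂e^{V₂} + βe^{(V₁+V₂)/2}` on `ℝ²`. -/
theorem liouville_system_solution (μ₁ μ₂ β : ℝ) (hμ₁ : 0 < μ₁) (hμ₂ : 0 < μ₂) (hβ : 0 < β)
    (V₁ V₂ : EuclideanSpace ℝ (Fin 2) → ℝ)
    (hV₂ : ∀ z, V₂ z = -2 * Real.log (1 + μ₂ / 8 * (1 + β / Real.sqrt (μ₁ * μ₂)) * ‖z‖ ^ 2))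
    (hV₁ : ∀ z, V₁ z = V₂ z - Real.log (μ₁ / μ₂)) :
    (∀ z, -laplacian V₁ z = μ₁ * Real.exp (V₁ z) + β * Real.exp ((V₁ z + V₂ z) / 2)) ∧
    (∀ z, -laplacian V₂ z = μ₂ * Real.exp (V₂ z) + β * Real.exp ((V₁ z + V₂ z) / 2)) := by
  set c := μ₂ / 8 * (1 + β / √(μ₁ * μ₂)) with hc_def
  have hc : 0 ≤ c := by positivity
  have lap₂ : ∀ z, laplacian V₂ z = -8 * c / (1 + c * ‖z‖ ^ 2) ^ 2 := by
    rw [funext hV₂]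
    exact laplacian_neg_two_mul_log_one_add_mul_norm_sq hc
  have lap₁ : ∀ z, laplacian V₁ z = laplacian V₂ z := by
    rw [funext hV₁]
    exact laplacian_sub_const V₂ _
  have exp₂ : ∀ z, exp (V₂ z) = ((1 + c * ‖z‖ ^ 2) ^ 2)⁻¹ := fun z => by
    rw [hV₂]
    exact exp_neg_two_mul_log (by positivity)
  have exp₁ : ∀ z, μ₁ * exp (V₁ z) = μ₂ * exp (V₂ z) := fun z => by
    rw [hV₁, exp_sub, exp_log (by positivity)]
    field_simp
  have exp_mean : ∀ z, exp ((V₁ z + V₂ z) / 2) = μ₂ / √(μ₁ * μ₂) * exp (V₂ z) := fun z => by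
    rw [hV₁, show (V₂ z - log (μ₁ / μ₂) + V₂ z) / 2 = V₂ z - log (μ₁ / μ₂) / 2 by ring,
      exp_sub, exp_log_div_two (by positivity), sqrt_div_eq_sqrt_mul_div hμ₁.le hμ₂]
    field_simp
  have sol₂ : ∀ z, -laplacian V₂ z = μ₂ * exp (V₂ z) + β * exp ((V₁ z + V₂ z) / 2) := fun z => by
    rw [lap₂, exp_mean, exp₂, hc_def]
    have : 0 < √(μ₁ * μ₂) := by positivity
    field_simp
  exact ⟨fun z => by rw [lap₁, exp₁]; exact sol₂ z, sol₂⟩
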